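/- arXiv:1602.08234 — 4 statements merged into one kernel-verified Lean document; each statement's English description precedes it below -/
import Mathlib

section
/- For a fixed W in GL_S(F_p) and N > S, the number of matrices X in GL_N(F_p) whose upper-left S×S corner equals W is exactly p^{S(N−S)} · ∏_{j=0}^{N−S−1} (p^N − p^{S+j}). -/
/-!
Split `X ∈ GL_N` into blocks `[[W, B], [C, D]]` with `W` in the upper-left corner. Since `W`
is invertible, `X` is invertible exactly when the Schur complement `D - C W⁻¹ B` is, so
`(B, C, D - C W⁻¹ B)` ranges freely over `M_{S×(N-S)} × M_{(N-S)×S} × GL_{N-S}`. Counting gives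
`q^{2S(N-S)} ∏_{i<N-S} (q^{N-S} - q^i)`, which is the stated product after pulling `q^S`
out of each factor.
-/

namespace Matrix

variable {R : Type*} [CommRing R] {m n : Type*} [Fintype m] [Fintype n]
  [DecidableEq m] [DecidableEq n]

noncomputable def unitsToBlocks₁₁EqEquiv (A : Matrix m m R) [Invertible A] :
    {Y : GL (m ⊕ n) R // (Y : Matrix (m ⊕ n) (m ⊕ n) R).toBlocks₁₁ = A} ≃
      Matrix m n R × Matrix n m R × GL n R where
  toFun Y :=
    have hY : IsUnit (fromBlocks A (Y.1 : Matrix (m ⊕ n) (m ⊕ n) R).toBlocks₁₂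
        (Y.1 : Matrix (m ⊕ n) (m ⊕ n) R).toBlocks₂₁
        (Y.1 : Matrix (m ⊕ n) (m ⊕ n) R).toBlocks₂₂) := by
      have h := Y.1.isUnit
      rwa [← fromBlocks_toBlocks (Y.1 : Matrix (m ⊕ n) (m ⊕ n) R), Y.2] at h
    ⟨(Y.1 : Matrix (m ⊕ n) (m ⊕ n) R).toBlocks₁₂, (Y.1 : Matrix (m ⊕ n) (m ⊕ n) R).toBlocks₂₁,
      (isUnit_fromBlocks_iff_of_invertible₁₁.mp hY).unit⟩
  invFun x :=
    have hX : IsUnit (fromBlocks A x.1 x.2.1 ((x.2.2 : Matrix n n R) + x.2.1 * ⅟A * x.1)) := by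
      rw [isUnit_fromBlocks_iff_of_invertible₁₁, add_sub_cancel_right]
      exact x.2.2.isUnit
    ⟨hX.unit, toBlocks_fromBlocks₁₁ ..⟩
  left_inv := by
    rintro ⟨Y, rfl⟩
    ext : 2
    simp only [IsUnit.unit_spec, sub_add_cancel, fromBlocks_toBlocks]
  right_inv := by
    rintro ⟨B, C, D⟩
    ext : 3 <;> simp

theorem card_GL_toBlocks₁₁_eq {K : Type*} [Field K] [Fintype K] {S M : ℕ}
    (A : Matrix (Fin S) (Fin S) K) [Invertible A] :
    Nat.card {Y : GL (Fin S ⊕ Fin M) K //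
        (Y : Matrix (Fin S ⊕ Fin M) (Fin S ⊕ Fin M) K).toBlocks₁₁ = A} =
      Fintype.card K ^ (S * M) * Fintype.card K ^ (M * S) *
        ∏ i : Fin M, (Fintype.card K ^ M - Fintype.card K ^ (i : ℕ)) := by
  rw [Nat.card_congr (unitsToBlocks₁₁EqEquiv A), Nat.card_prod, Nat.card_prod, card_GL_field,
    mul_assoc]
  simp only [Matrix, Nat.card_eq_fintype_card, Fintype.card_pi, Finset.prod_const,
    Finset.card_univ, Fintype.card_fin]
  ring

variable {o : Type*} [Fintype o] [DecidableEq o]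

def unitsSubmatrixEqEquiv (e : m ⊕ n ≃ o) (A : Matrix m m R) :
    {X : GL o R // (X : Matrix o o R).submatrix (e ∘ Sum.inl) (e ∘ Sum.inl) = A} ≃
      {Y : GL (m ⊕ n) R // (Y : Matrix (m ⊕ n) (m ⊕ n) R).toBlocks₁₁ = A} :=
  (Units.mapEquiv (reindexAlgEquiv R R e.symm).toMulEquiv).toEquiv.subtypeEquiv fun _ => Iff.rfl

end Matrix

theorem pow_mul_prod_pow_sub_pow_eq (q S M : ℕ) :
    q ^ (S * M) * q ^ (M * S) * ∏ i : Fin M, (q ^ M - q ^ (i : ℕ)) =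
      q ^ (S * M) * ∏ j ∈ Finset.range M, (q ^ (S + M) - q ^ (S + j)) := by
  have hfactor (j : ℕ) : q ^ (S + M) - q ^ (S + j) = q ^ S * (q ^ M - q ^ j) := by
    rw [Nat.mul_sub_left_distrib, ← pow_add, ← pow_add]
  simp only [hfactor, Finset.prod_mul_distrib, Finset.prod_const, Finset.card_range,
    ← pow_mul, Fin.prod_univ_eq_prod_range (fun i => q ^ M - q ^ i)]
  ring

theorem stmt_2_general (p : ℕ) (hp : p.Prime) (S N : ℕ) (hSN : S < N)
    (W : Matrix (Fin S) (Fin S) (ZMod p)) (hW : IsUnit W) :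
    Nat.card {X : GL (Fin N) (ZMod p) //
        (fun i j : Fin S => (X : Matrix (Fin N) (Fin N) (ZMod p))
          (Fin.castLE hSN.le i) (Fin.castLE hSN.le j)) = W} =
      p ^ (S * (N - S)) * ∏ j ∈ Finset.range (N - S), (p ^ N - p ^ (S + j)) := by
  have : Fact p.Prime := ⟨hp⟩
  have := hW.invertible
  obtain ⟨M, rfl⟩ : ∃ M, N = S + M := ⟨N - S, by omega⟩
  -- `finSumFinEquiv ∘ Sum.inl` is `Fin.castAdd M`, which unfolds to `Fin.castLE hSN.le`.
  refine (Nat.card_congr (Matrix.unitsSubmatrixEqEquiv (n := Fin M) finSumFinEquiv W)).trans ?_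
  rw [Matrix.card_GL_toBlocks₁₁_eq, ZMod.card, Nat.add_sub_cancel_left,
    pow_mul_prod_pow_sub_pow_eq]

theorem stmt_2 (p : ℕ) (hp : p.Prime) (S N : ℕ) (hS : 1 ≤ S) (hSN : S < N)
    (W : Matrix (Fin S) (Fin S) (ZMod p)) (hW : IsUnit W) :
    Nat.card {X : GL (Fin N) (ZMod p) //
        (fun i j : Fin S => (X : Matrix (Fin N) (Fin N) (ZMod p))
          (Fin.castLE hSN.le i) (Fin.castLE hSN.le j)) = W} =
      p ^ (S * (N - S)) * ∏ j ∈ Finset.range (N - S), (p ^ N - p ^ (S + j)) :=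
  stmt_2_general p hp S N hSN W hW
end

section
/- For any matrix W in M_S(F_p) and any N > S, the number of matrices X in GL_N(F_p) whose upper-left S×S corner equals W is at least ∏_{i=0}^{S−1} (p^{N−S} − p^i) · ∏_{j=0}^{N−S−1} (p^N − p^{S+j}). -/
/-!
Build an invertible matrix with upper-left corner `W` column by column, each new column avoiding
the span of the previous ones. For `i < S` the top `S` entries of column `i` are prescribed by `W`,
which leaves `p ^ (N - S)` candidates, at most `p ^ i` of them in the span of the `i` earlier
columns; for `i ≥ S` the column is free among `p ^ N` vectors, again minus at most `p ^ i`.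
Multiplying these counts gives the bound.
-/

open Submodule Set

theorem Finset.prod_range_ite_lt {M : Type*} [CommMonoid M] {S N : ℕ} (h : S ≤ N) (f g : ℕ → M) :
    ∏ i ∈ range N, (if i < S then f i else g i) =
      (∏ i ∈ range S, f i) * ∏ j ∈ range (N - S), g (S + j) := by
  rw [← Nat.add_sub_cancel' h, prod_range_add, Nat.add_sub_cancel_left]
  congr 1
  · exact prod_congr rfl fun i hi => if_pos (mem_range.mp hi)
  · exact prod_congr rfl fun j _ => if_neg (Nat.not_lt.mpr (Nat.le_add_right S j))

theorem pow_le_ncard_castLE_fiber {α : Type*} [Finite α] {S N : ℕ} (h : S ≤ N) (w : Fin S → α) :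
    Nat.card α ^ (N - S) ≤ {v : Fin N → α | ∀ j, v (Fin.castLE h j) = w j}.ncard := by
  have hN : S + (N - S) = N := Nat.add_sub_cancel' h
  let f (g : Fin (N - S) → α) : {v : Fin N → α | ∀ j, v (Fin.castLE h j) = w j} :=
    ⟨fun x => Fin.append w g (x.cast hN.symm), fun j => Fin.append_left w g j⟩
  have hf : Function.Injective f := fun g g' hgg' => funext fun j => by
    simpa [f] using congrFun (congrArg Subtype.val hgg') ((Fin.natAdd S j).cast hN)
  rw [← Nat.card_coe_set_eq, ← Nat.card_fin (N - S), ← Nat.card_fun]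
  exact Nat.card_le_card_of_injective f hf

section LinearIndependent

variable {K V : Type*} [Field K] [AddCommGroup V] [Module K V]

theorem Submodule.ncard_span_range_le [Finite K] {m : ℕ} (t : Fin m → V) :
    (span K (range t) : Set V).ncard ≤ Nat.card K ^ m := by
  have := FiniteDimensional.span_of_finite K (finite_range t)
  rw [← Nat.card_coe_set_eq, SetLike.coe_sort_coe, Module.natCard_eq_pow_finrank (K := K)]
  exact Nat.pow_le_pow_right Nat.card_pos ((finrank_range_le_card t).trans_eq (Fintype.card_fin m))

theorem sub_pow_le_ncard_sdiff_span [Finite K] [Finite V] {A : Set V} {a : ℕ} (hA : a ≤ A.ncard)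
    {m : ℕ} (t : Fin m → V) : a - Nat.card K ^ m ≤ (A \ span K (range t)).ncard :=
  calc a - Nat.card K ^ m ≤ A.ncard - (span K (range t) : Set V).ncard :=
        tsub_le_tsub hA (ncard_span_range_le t)
    _ ≤ (A \ span K (range t)).ncard := le_ncard_sdiff _ _

def linearIndependentSnocEquiv {k : ℕ} (C : Fin (k + 1) → Set V) :
    {s : Fin (k + 1) → V // LinearIndependent K s ∧ ∀ i, s i ∈ C i} ≃
      Σ t : {t : Fin k → V // LinearIndependent K t ∧ ∀ i, t i ∈ C i.castSucc},
        ↥(C (Fin.last k) \ span K (range t.1)) where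
  toFun s :=
    have h := linearIndependent_finSnoc.mp (by rw [Fin.snoc_init_self]; exact s.2.1)
    ⟨⟨Fin.init s.1, h.1, fun i => s.2.2 i.castSucc⟩, ⟨s.1 (Fin.last k), s.2.2 _, h.2⟩⟩
  invFun t := ⟨Fin.snoc t.1.1 t.2.1, linearIndependent_finSnoc.mpr ⟨t.1.2.1, t.2.2.2⟩,
    Fin.lastCases (by simpa using t.2.2.1) (fun i => by simpa using t.1.2.2 i)⟩
  left_inv s := by simp
  right_inv t := Sigma.subtype_ext (Subtype.ext (Fin.init_snoc (α := fun _ => V) _ _))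
    (Fin.snoc_last (α := fun _ => V) _ _)

theorem prod_le_card_linearIndependent_mem [Finite V] {k : ℕ} (C : Fin k → Set V) (c : Fin k → ℕ)
    (hc : ∀ (i : Fin k) (t : Fin i → V), c i ≤ (C i \ span K (range t)).ncard) :
    ∏ i, c i ≤ Nat.card {s : Fin k → V // LinearIndependent K s ∧ ∀ i, s i ∈ C i} := by
  induction k with
  | zero =>
    have : Nonempty {s : Fin 0 → V // LinearIndependent K s ∧ ∀ i, s i ∈ C i} :=
      ⟨⟨Fin.elim0, linearIndependent_empty_type, fun i => i.elim0⟩⟩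
    simp
  | succ k ih =>
    let _ := Fintype.ofFinite {t : Fin k → V // LinearIndependent K t ∧ ∀ i, t i ∈ C i.castSucc}
    rw [Nat.card_congr (linearIndependentSnocEquiv C), Nat.card_sigma, Fin.prod_univ_castSucc]
    calc (∏ i : Fin k, c i.castSucc) * c (Fin.last k)
        ≤ Nat.card {t : Fin k → V // LinearIndependent K t ∧ ∀ i, t i ∈ C i.castSucc} *
            c (Fin.last k) :=
          Nat.mul_le_mul_right _ (ih _ _ fun i => hc i.castSucc)
      _ ≤ _ := by
          rw [← Fintype.card_eq_nat_card, ← smul_eq_mul, ← Finset.card_univ, ← Finset.sum_const]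
          refine Finset.sum_le_sum fun t _ => ?_
          rw [Nat.card_coe_set_eq]
          exact hc (Fin.last k) t.1

end LinearIndependent

theorem Matrix.prod_le_card_GL_submatrix_castLE_eq {K : Type*} [Field K] [Finite K] {S N : ℕ}
    (h : S ≤ N) (W : Matrix (Fin S) (Fin S) K) :
    (∏ i ∈ Finset.range S, (Nat.card K ^ (N - S) - Nat.card K ^ i)) *
        ∏ j ∈ Finset.range (N - S), (Nat.card K ^ N - Nat.card K ^ (S + j)) ≤
      Nat.card {X : GL (Fin N) K //
        (X : Matrix (Fin N) (Fin N) K).submatrix (Fin.castLE h) (Fin.castLE h) = W} := by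
  let _ := Fintype.ofFinite K
  set q := Nat.card K
  -- the admissible `i`-th columns; the constraint is vacuous unless `i < S`
  let C (i : Fin N) : Set (Fin N → K) :=
    {v | ∀ j k : Fin S, Fin.castLE h k = i → v (Fin.castLE h j) = W j k}
  have hcols : Nat.card {X : GL (Fin N) K //
        (X : Matrix (Fin N) (Fin N) K).submatrix (Fin.castLE h) (Fin.castLE h) = W} =
      Nat.card {s : Fin N → Fin N → K // LinearIndependent K s ∧ ∀ i, s i ∈ C i} := by
    refine Nat.card_congr (((Matrix.equiv_GL_linearindependent N).subtypeEquiv fun X => ?_).trans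
      (Equiv.subtypeSubtypeEquivSubtypeInter _ _))
    simp only [← Matrix.ext_iff, Matrix.submatrix_apply]
    exact ⟨fun hX i j k hk => hk ▸ hX j k, fun hX j k => hX _ j k rfl⟩
  have hC (i : Fin N) (t : Fin i → Fin N → K) :
      (if (i : ℕ) < S then q ^ (N - S) - q ^ (i : ℕ) else q ^ N - q ^ (i : ℕ)) ≤
        (C i \ span K (range t)).ncard := by
    split_ifs with hi
    · refine sub_pow_le_ncard_sdiff_span
        ((pow_le_ncard_castLE_fiber h fun j => W j ⟨i, hi⟩).trans (ncard_le_ncard ?_)) t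
      intro v hv j k hk
      have hki : (k : ℕ) = i := congrArg Fin.val hk
      obtain rfl : k = ⟨i, hi⟩ := Fin.ext hki
      exact hv j
    · refine sub_pow_le_ncard_sdiff_span (le_of_eq ?_) t
      have : C i = univ := eq_univ_of_forall fun v j k hk => absurd (hk ▸ k.isLt) hi
      rw [this, ncard_univ, Nat.card_fun, Nat.card_fin]
  have := prod_le_card_linearIndependent_mem C _ hC
  rwa [Fin.prod_univ_eq_prod_range
    (fun i => if i < S then q ^ (N - S) - q ^ i else q ^ N - q ^ i),
    Finset.prod_range_ite_lt h, ← hcols] at this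

theorem stmt_4_general (p : ℕ) (hp : p.Prime) (S N : ℕ) (hSN : S < N)
    (W : Matrix (Fin S) (Fin S) (ZMod p)) :
    (∏ i ∈ Finset.range S, (p ^ (N - S) - p ^ i)) *
        ∏ j ∈ Finset.range (N - S), (p ^ N - p ^ (S + j)) ≤
      Nat.card {X : GL (Fin N) (ZMod p) //
        (fun i j : Fin S => (X : Matrix (Fin N) (Fin N) (ZMod p))
          (Fin.castLE hSN.le i) (Fin.castLE hSN.le j)) = W} := by
  have := Fact.mk hp
  have h := Matrix.prod_le_card_GL_submatrix_castLE_eq hSN.le W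
  rw [Nat.card_zmod] at h
  exact h

theorem stmt_4 (p : ℕ) (hp : p.Prime) (S N : ℕ) (hS : 1 ≤ S) (hSN : S < N)
    (W : Matrix (Fin S) (Fin S) (ZMod p)) :
    (∏ i ∈ Finset.range S, (p ^ (N - S) - p ^ i)) *
        ∏ j ∈ Finset.range (N - S), (p ^ N - p ^ (S + j)) ≤
      Nat.card {X : GL (Fin N) (ZMod p) //
        (fun i j : Fin S => (X : Matrix (Fin N) (Fin N) (ZMod p))
          (Fin.castLE hSN.le i) (Fin.castLE hSN.le j)) = W} :=
  stmt_4_general p hp S N hSN W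
end

section
/- If X is sampled uniformly from GL_N(F_q), then for every W in M_S(F_q), the probability P(X[S] = W) converges to q^{−S²} as N → ∞; i.e., the law of the truncated corner X[S] converges to the uniform distribution on M_S(F_q). -/
/-!
Call `A n` the number of linearly independent `S`-tuples of vectors in `F^(S+n)` whose top
`S × S` block is `W`. The remaining `n` columns of an invertible matrix extend its first `S`
columns to a basis in `∏_{j<n} (q^(S+n) - q^(S+j))` ways whatever those columns are, so
`P(X[S] = W) = A n / ∏_{t<S} (q^(S+n) - q^t)`. Such a tuple is determined by its bottom
`n × S` block, and every independent bottom block gives one, so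
`∏_{j<S} (q^n - q^j) ≤ A n ≤ q^(nS)`; after division both bounds tend to `q^(-S²)`.
-/

open Filter

section LinearIndependent

variable {K V : Type*} [DivisionRing K] [AddCommGroup V] [Module K V]

theorem natCard_compl_span_of_linearIndependent [Finite V] {k : ℕ} {r : Fin k → V}
    (hr : LinearIndependent K r) :
    Nat.card ((Submodule.span K (Set.range r))ᶜ : Set V) = Nat.card V - Nat.card K ^ k := by
  rw [Nat.card_coe_set_eq, Set.ncard_compl, ← Nat.card_coe_set_eq, SetLike.coe_sort_coe,
    Module.natCard_eq_pow_finrank (K := K) (V := Submodule.span K (Set.range r)),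
    finrank_span_eq_card hr, Fintype.card_fin]

theorem linearIndependent_append_snoc {k m : ℕ} {r : Fin k → V} {t : Fin m → V} {x : V} :
    LinearIndependent K (Fin.append r (Fin.snoc t x)) ↔
      LinearIndependent K (Fin.append r t) ∧
        x ∉ Submodule.span K (Set.range (Fin.append r t)) := by
  rw [Fin.append_snoc, linearIndependent_finSnoc]

variable (K) in
def linearIndependentAppendSnocEquiv {k : ℕ} (r : Fin k → V) (m : ℕ) :
    {t : Fin (m + 1) → V // LinearIndependent K (Fin.append r t)} ≃
      Σ t : {t : Fin m → V // LinearIndependent K (Fin.append r t)},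
        ((Submodule.span K (Set.range (Fin.append r t.1)))ᶜ : Set V) where
  toFun t :=
    have h := linearIndependent_append_snoc.mp ((Fin.snoc_init_self t.1).symm ▸ t.2)
    ⟨⟨Fin.init t.1, h.1⟩, ⟨t.1 (Fin.last m), h.2⟩⟩
  invFun s := ⟨Fin.snoc s.1.1 s.2.1, linearIndependent_append_snoc.mpr ⟨s.1.2, s.2.2⟩⟩
  left_inv t := Subtype.ext (Fin.snoc_init_self t.1)
  right_inv := fun ⟨⟨t, ht⟩, ⟨x, hx⟩⟩ => by
    refine Sigma.ext (Subtype.ext (by simp)) ((Subtype.heq_iff_coe_eq fun y => ?_).2 (by simp))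
    simp

attribute [local instance] Fintype.ofFinite in
theorem natCard_linearIndependent_append [Finite V] {k : ℕ} {r : Fin k → V}
    (hr : LinearIndependent K r) (m : ℕ) :
    Nat.card {t : Fin m → V // LinearIndependent K (Fin.append r t)} =
      ∏ j : Fin m, (Nat.card V - Nat.card K ^ (k + j)) := by
  induction m with
  | zero =>
    have hall (t : Fin 0 → V) : LinearIndependent K (Fin.append r t) := by
      rwa [Subsingleton.elim t Fin.elim0, Fin.append_elim0]
    rw [Nat.card_congr (Equiv.subtypeUnivEquiv hall)]
    simp
  | succ m ih =>
    rw [Nat.card_congr (linearIndependentAppendSnocEquiv K r m), Nat.card_sigma,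
      Finset.sum_congr rfl fun t _ => natCard_compl_span_of_linearIndependent t.2,
      Finset.sum_const, Finset.card_univ, ← Nat.card_eq_fintype_card, ih, smul_eq_mul,
      Fin.prod_univ_castSucc]
    simp

variable (K) in
def linearIndependentAppendEquiv (k m : ℕ) (P : (Fin k → V) → Prop) :
    {s : Fin (k + m) → V // LinearIndependent K s ∧ P (fun i => s (Fin.castAdd m i))} ≃
      Σ r : {r : Fin k → V // LinearIndependent K r ∧ P r},
        {t : Fin m → V // LinearIndependent K (Fin.append r.1 t)} where
  toFun s :=
    ⟨⟨fun i => s.1 (Fin.castAdd m i), s.2.1.comp _ (Fin.castAdd_injective k m), s.2.2⟩,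
      ⟨fun j => s.1 (Fin.natAdd k j), by rw [Fin.append_castAdd_natAdd]; exact s.2.1⟩⟩
  invFun p := ⟨Fin.append p.1.1 p.2.1, p.2.2, by simpa using p.1.2.2⟩
  left_inv s := Subtype.ext (Fin.append_castAdd_natAdd)
  right_inv := fun ⟨⟨r, hr⟩, ⟨t, ht⟩⟩ => by
    refine Sigma.ext (Subtype.ext (by simp)) ((Subtype.heq_iff_coe_eq fun y => ?_).2 (by simp))
    simp

attribute [local instance] Fintype.ofFinite in
theorem natCard_linearIndependent_of_prefix [Finite V] (k m : ℕ) (P : (Fin k → V) → Prop) :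
    Nat.card {s : Fin (k + m) → V // LinearIndependent K s ∧ P (fun i => s (Fin.castAdd m i))} =
      Nat.card {r : Fin k → V // LinearIndependent K r ∧ P r} *
        ∏ j : Fin m, (Nat.card V - Nat.card K ^ (k + j)) := by
  rw [Nat.card_congr (linearIndependentAppendEquiv K k m P), Nat.card_sigma,
    Finset.sum_congr rfl fun r _ => natCard_linearIndependent_append r.2.1 m,
    Finset.sum_const, Finset.card_univ, ← Nat.card_eq_fintype_card, smul_eq_mul]

end LinearIndependent

section Corner

variable {F : Type*} [Field F] [Fintype F]

local notation "q" => Fintype.card F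

-- `Matrix.equiv_GL_linearindependent` lists the columns of a matrix, so `c j i` is the
-- entry `(i, j)`.
theorem natCard_GL_corner (S n : ℕ) (W : Matrix (Fin S) (Fin S) F) :
    Nat.card {X : GL (Fin (S + n)) F //
        (fun i j : Fin S => (X : Matrix (Fin (S + n)) (Fin (S + n)) F)
          (Fin.castAdd n i) (Fin.castAdd n j)) = W} =
      Nat.card {c : Fin S → Fin (S + n) → F //
          LinearIndependent F c ∧ (fun i j => c j (Fin.castAdd n i)) = W} *
        ∏ j : Fin n, (q ^ (S + n) - q ^ (S + (j : ℕ))) := by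
  have e : {X : GL (Fin (S + n)) F //
        (fun i j : Fin S => (X : Matrix (Fin (S + n)) (Fin (S + n)) F)
          (Fin.castAdd n i) (Fin.castAdd n j)) = W} ≃
      {c : Fin (S + n) → Fin (S + n) → F // LinearIndependent F c ∧
        (fun i j => c (Fin.castAdd n j) (Fin.castAdd n i)) = W} :=
    (@Equiv.subtypeEquiv _ _ _
        (fun c => (fun i j => c.1 (Fin.castAdd n j) (Fin.castAdd n i)) = W)
        (Matrix.equiv_GL_linearindependent (S + n)) fun _ => Iff.rfl).trans
      (Equiv.subtypeSubtypeEquivSubtypeInter (fun c => LinearIndependent F c)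
        fun c : Fin (S + n) → Fin (S + n) → F =>
          (fun i j => c (Fin.castAdd n j) (Fin.castAdd n i)) = W)
  rw [Nat.card_congr e,
    natCard_linearIndependent_of_prefix S n
      fun c : Fin S → Fin (S + n) → F => (fun i j => c j (Fin.castAdd n i)) = W]
  simp [Nat.card_eq_fintype_card]

theorem natCard_GL_eq_mul (S n : ℕ) :
    Nat.card (GL (Fin (S + n)) F) =
      (∏ t : Fin S, (q ^ (S + n) - q ^ (t : ℕ))) *
        ∏ j : Fin n, (q ^ (S + n) - q ^ (S + (j : ℕ))) := by
  rw [Matrix.card_GL_field, Fin.prod_univ_add]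
  simp

theorem natCard_linearIndependent_top_le (S n k : ℕ) (W : Matrix (Fin S) (Fin k) F) :
    Nat.card {c : Fin k → Fin (S + n) → F //
        LinearIndependent F c ∧ (fun i j => c j (Fin.castAdd n i)) = W} ≤ q ^ (n * k) := by
  have hinj : Function.Injective fun c : {c : Fin k → Fin (S + n) → F //
      LinearIndependent F c ∧ (fun i j => c j (Fin.castAdd n i)) = W} =>
        fun j l => c.1 j (Fin.natAdd S l) := by
    rintro ⟨c, _, hc⟩ ⟨c', _, hc'⟩ h
    refine Subtype.ext (funext fun j => ?_)
    change c j = c' j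
    rw [← Fin.append_castAdd_natAdd (f := c j), ← Fin.append_castAdd_natAdd (f := c' j)]
    congr 1
    · exact funext fun i => (congrFun (congrFun hc i) j).trans (congrFun (congrFun hc' i) j).symm
    · exact congrFun h j
  refine (Nat.card_le_card_of_injective _ hinj).trans_eq ?_
  simp [Nat.card_eq_fintype_card, pow_mul]

theorem prod_le_natCard_linearIndependent_top (S : ℕ) {n k : ℕ} (hk : k ≤ n)
    (W : Matrix (Fin S) (Fin k) F) :
    ∏ j : Fin k, (q ^ n - q ^ (j : ℕ)) ≤
      Nat.card {c : Fin k → Fin (S + n) → F //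
        LinearIndependent F c ∧ (fun i j => c j (Fin.castAdd n i)) = W} := by
  have hbottom := card_linearIndependent (K := F) (V := Fin n → F) (k := k) (by simpa using hk)
  rw [Module.finrank_fin_fun] at hbottom
  rw [← hbottom]
  refine Nat.card_le_card_of_injective
    (fun b => ⟨fun j => Fin.append (fun i => W i j) (b.1 j), ?_, ?_⟩) ?_
  · refine LinearIndependent.of_comp (LinearMap.funLeft F F (Fin.natAdd S)) ?_
    have hcomp : LinearMap.funLeft F F (Fin.natAdd S) ∘
        (fun j => Fin.append (fun i => W i j) (b.1 j)) = b.1 := by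
      ext j l
      simp [LinearMap.funLeft]
    rw [hcomp]
    exact b.2
  · ext i j
    simp
  · intro b b' h
    ext j l
    simpa using congrFun (congrFun (congrArg Subtype.val h) j) (Fin.natAdd S l)

theorem natCast_pow_sub_pow {b c : ℕ} (h : b ≤ c) :
    ((q ^ c - q ^ b : ℕ) : ℝ) = (q : ℝ) ^ c - (q : ℝ) ^ b := by
  rw [Nat.cast_sub (Nat.pow_le_pow_right Fintype.card_pos h)]
  push_cast
  rfl

theorem prod_pow_add_sub_pow_pos (S n : ℕ) :
    0 < ∏ t : Fin S, ((q : ℝ) ^ (S + n) - (q : ℝ) ^ (t : ℕ)) :=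
  Finset.prod_pos fun t _ => sub_pos.2
    (pow_lt_pow_right₀ (by exact_mod_cast Fintype.one_lt_card) (by omega))

theorem natCard_GL_corner_div_natCard_GL (S n : ℕ) (W : Matrix (Fin S) (Fin S) F) :
    (Nat.card {X : GL (Fin (S + n)) F //
        (fun i j : Fin S => (X : Matrix (Fin (S + n)) (Fin (S + n)) F)
          (Fin.castAdd n i) (Fin.castAdd n j)) = W} : ℝ) / Nat.card (GL (Fin (S + n)) F) =
      Nat.card {c : Fin S → Fin (S + n) → F //
          LinearIndependent F c ∧ (fun i j => c j (Fin.castAdd n i)) = W} /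
        ∏ t : Fin S, ((q : ℝ) ^ (S + n) - (q : ℝ) ^ (t : ℕ)) := by
  have hpos : 0 < ∏ j : Fin n, (q ^ (S + n) - q ^ (S + (j : ℕ))) :=
    Finset.prod_pos fun j _ => Nat.sub_pos_of_lt
      (Nat.pow_lt_pow_right Fintype.one_lt_card (by omega))
  rw [natCard_GL_corner, natCard_GL_eq_mul, Nat.cast_mul, Nat.cast_mul,
    mul_div_mul_right _ _ (by positivity), Nat.cast_prod]
  exact congrArg _ (Finset.prod_congr rfl fun t _ => natCast_pow_sub_pow (by omega))

theorem prod_pow_sub_div_le_natCard_GL_corner_div (S : ℕ) {n : ℕ} (hn : S ≤ n)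
    (W : Matrix (Fin S) (Fin S) F) :
    ∏ j : Fin S,
      (((q : ℝ) ^ n - (q : ℝ) ^ (j : ℕ)) / ((q : ℝ) ^ (S + n) - (q : ℝ) ^ (j : ℕ))) ≤
      (Nat.card {X : GL (Fin (S + n)) F //
        (fun i j : Fin S => (X : Matrix (Fin (S + n)) (Fin (S + n)) F)
          (Fin.castAdd n i) (Fin.castAdd n j)) = W} : ℝ) / Nat.card (GL (Fin (S + n)) F) := by
  have hnum : ∏ j : Fin S, ((q : ℝ) ^ n - (q : ℝ) ^ (j : ℕ)) =
      ((∏ j : Fin S, (q ^ n - q ^ (j : ℕ)) : ℕ) : ℝ) := by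
    rw [Nat.cast_prod]
    exact Finset.prod_congr rfl fun j _ => (natCast_pow_sub_pow (by omega)).symm
  rw [natCard_GL_corner_div_natCard_GL, Finset.prod_div_distrib, hnum]
  gcongr
  · exact (prod_pow_add_sub_pow_pos S n).le
  · exact prod_le_natCard_linearIndependent_top S hn W

theorem natCard_GL_corner_div_le_prod (S n : ℕ) (W : Matrix (Fin S) (Fin S) F) :
    (Nat.card {X : GL (Fin (S + n)) F //
        (fun i j : Fin S => (X : Matrix (Fin (S + n)) (Fin (S + n)) F)
          (Fin.castAdd n i) (Fin.castAdd n j)) = W} : ℝ) / Nat.card (GL (Fin (S + n)) F) ≤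
      ∏ j : Fin S, ((q : ℝ) ^ n / ((q : ℝ) ^ (S + n) - (q : ℝ) ^ (j : ℕ))) := by
  rw [natCard_GL_corner_div_natCard_GL, Finset.prod_div_distrib, Finset.prod_const,
    Finset.card_univ, Fintype.card_fin, ← pow_mul]
  gcongr
  · exact (prod_pow_add_sub_pow_pos S n).le
  · exact_mod_cast natCard_linearIndependent_top_le S n S W

end Corner

theorem tendsto_pow_sub_div_pow_add_sub {Q : ℝ} (hQ : 1 < Q) (S : ℕ) (a b : ℝ) :
    Tendsto (fun n : ℕ => (Q ^ n - a) / (Q ^ (S + n) - b)) atTop (nhds (Q ^ S)⁻¹) := by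
  have hpow : Tendsto (fun n : ℕ => Q⁻¹ ^ n) atTop (nhds 0) :=
    tendsto_pow_atTop_nhds_zero_of_lt_one (by positivity) (inv_lt_one_of_one_lt₀ hQ)
  have hQS : Q ^ S ≠ 0 := (pow_pos (by linarith) S).ne'
  have hlim : Tendsto (fun n : ℕ => (1 - a * Q⁻¹ ^ n) / (Q ^ S - b * Q⁻¹ ^ n)) atTop
      (nhds ((1 - a * 0) / (Q ^ S - b * 0))) :=
    ((hpow.const_mul a).const_sub 1).div ((hpow.const_mul b).const_sub (Q ^ S))
      (by rwa [mul_zero, sub_zero])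
  rw [mul_zero, mul_zero, sub_zero, sub_zero, one_div] at hlim
  refine hlim.congr fun n => ?_
  have hQn : Q ^ n ≠ 0 := by positivity
  rw [← mul_div_mul_right _ _ hQn, inv_pow, pow_add]
  congr 1 <;> field_simp

theorem tendsto_prod_pow_sub_div_pow_add_sub {Q : ℝ} (hQ : 1 < Q) (S : ℕ)
    (a b : Fin S → ℝ) :
    Tendsto (fun n : ℕ => ∏ j, (Q ^ n - a j) / (Q ^ (S + n) - b j)) atTop
      (nhds (Q ^ (S ^ 2))⁻¹) := by
  have hlim : (Q ^ (S ^ 2))⁻¹ = ∏ _j : Fin S, (Q ^ S)⁻¹ := by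
    rw [Finset.prod_const, Finset.card_univ, Fintype.card_fin, inv_pow, ← pow_mul, sq]
  rw [hlim]
  exact tendsto_finsetProd _ fun j _ => tendsto_pow_sub_div_pow_add_sub hQ S (a j) (b j)

theorem stmt_6_general (q : ℕ) (F : Type) [Field F] [Fintype F]
    (hq : Fintype.card F = q) (S : ℕ)
    (W : Matrix (Fin S) (Fin S) F) :
    Tendsto (fun n : ℕ =>
        (Nat.card {X : GL (Fin (S + n)) F //
            (fun i j : Fin S => (X : Matrix (Fin (S + n)) (Fin (S + n)) F)
              (Fin.castLE (Nat.le_add_right S n) i)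
              (Fin.castLE (Nat.le_add_right S n) j)) = W} : ℝ) /
          (Nat.card (GL (Fin (S + n)) F) : ℝ))
      atTop (nhds (((q : ℝ) ^ (S ^ 2))⁻¹)) := by
  subst hq
  have hQ : (1 : ℝ) < Fintype.card F := by exact_mod_cast Fintype.one_lt_card
  set Q : ℝ := (Fintype.card F : ℝ)
  have hlower :=
    tendsto_prod_pow_sub_div_pow_add_sub hQ S (fun j => Q ^ (j : ℕ)) fun j => Q ^ (j : ℕ)
  have hupper := tendsto_prod_pow_sub_div_pow_add_sub hQ S 0 fun j => Q ^ (j : ℕ)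
  simp only [Pi.zero_apply, sub_zero] at hupper
  refine tendsto_of_tendsto_of_tendsto_of_le_of_le' hlower hupper ?_ ?_
  · filter_upwards [eventually_ge_atTop S] with n hn
      using prod_pow_sub_div_le_natCard_GL_corner_div S hn W
  · exact Eventually.of_forall fun n => natCard_GL_corner_div_le_prod S n W

theorem stmt_6 (q : ℕ) (F : Type) [Field F] [Fintype F] [DecidableEq F]
    (hq : Fintype.card F = q) (S : ℕ) (hS : 1 ≤ S)
    (W : Matrix (Fin S) (Fin S) F) :
    Tendsto (fun n : ℕ =>
        (Nat.card {X : GL (Fin (S + n)) F //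
            (fun i j : Fin S => (X : Matrix (Fin (S + n)) (Fin (S + n)) F)
              (Fin.castLE (Nat.le_add_right S n) i)
              (Fin.castLE (Nat.le_add_right S n) j)) = W} : ℝ) /
          (Nat.card (GL (Fin (S + n)) F) : ℝ))
      atTop (nhds (((q : ℝ) ^ (S ^ 2))⁻¹)) :=
  stmt_6_general q F hq S W
end

section
/- If X is sampled uniformly from GL_N(Z/p^r Z), then for every W in M_S(Z/p^r Z), the probability P(X[S] = W) converges to p^{−r S²} as N → ∞. -/
/-!
The fibres of `X ↦ X[S, :]` (the top `S` rows) on `GL_N` are right cosets of one subgroup, so they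
all have the same size, and the probability is the fraction of "unimodular" `S × N` blocks (those
occurring as top rows of an invertible matrix) whose left `S × S` corner is `W`. Over the local
ring `ℤ/p^r` a block is unimodular as soon as it has full rank modulo `p`. A fixed nonzero
`v ∈ 𝔽_p^S` kills a random `S × m` block modulo `p` with probability `p^{-m}`, so all but a fraction
`≤ p^{S-m}` of the `S × m` blocks have full rank modulo `p`. Hence, with `q = p^r`, there are
`~ q^{S(N-S)}` unimodular blocks with corner `W` and `~ q^{SN}` unimodular blocks in all.
-/

open Filter Matrix Topology

theorem Nat.card_subtype_comp_eq_mul {α β : Type*} [Finite α] (f : α → β) {c : ℕ}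
    (hc : ∀ a, Nat.card {x // f x = f a} = c) (Q : β → Prop) :
    Nat.card {x // Q (f x)} = c * Nat.card {y // Q y ∧ y ∈ Set.range f} := by
  have : Finite {y // Q y ∧ y ∈ Set.range f} :=
    ((Set.finite_range f).subset fun _ (hy : _ ∧ _) => hy.2).to_subtype
  have := Fintype.ofFinite {y // Q y ∧ y ∈ Set.range f}
  let e : {x // Q (f x)} ≃ Σ y : {y // Q y ∧ y ∈ Set.range f}, {x // f x = y} :=
    { toFun x := ⟨⟨f x, x.2, x.1, rfl⟩, x.1, rfl⟩
      invFun z := ⟨z.2.1, by rw [z.2.2]; exact z.1.2.1⟩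
      left_inv _ := rfl
      right_inv := by
        rintro ⟨⟨y, hy⟩, x, hx : f x = y⟩
        subst hx
        rfl }
  rw [Nat.card_congr e, Nat.card_sigma, Finset.sum_congr rfl fun y _ => ?_, Finset.sum_const,
    smul_eq_mul, Finset.card_univ, Nat.card_eq_fintype_card, mul_comm]
  obtain ⟨a, ha⟩ := y.2.2
  rw [← ha, hc]

theorem Nat.card_matrix {m n R : Type*} [Finite m] [Finite n] :
    Nat.card (Matrix m n R) = Nat.card R ^ (Nat.card m * Nat.card n) := by
  show Nat.card (m → n → R) = _
  rw [Nat.card_fun, Nat.card_fun, ← pow_mul, mul_comm]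

namespace Matrix

theorem toRows₁_mul {R m n l : Type*} [NonUnitalNonAssocSemiring R] [Fintype l]
    (A : Matrix (m ⊕ n) l R) (B : Matrix l l R) : (A * B).toRows₁ = A.toRows₁ * B := by
  ext i j
  simp [mul_apply]

section Unimodular

variable {m n : Type*} [Fintype m] [Fintype n] [DecidableEq m] [DecidableEq n]

variable (m n) in
def unimodularRows (R : Type*) [Semiring R] : Set (Matrix m (m ⊕ n) R) :=
  Set.range fun X : GL (m ⊕ n) R => X.val.toRows₁

theorem exists_isUnit_toRows₁_eq {K : Type*} [Field K] {M : Matrix m (m ⊕ n) K}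
    (hM : LinearIndependent K M.row) :
    ∃ Y : Matrix (m ⊕ n) (m ⊕ n) K, IsUnit Y ∧ Y.toRows₁ = M := by
  let b := Module.Basis.sumExtend hM
  -- `Basis.sumExtend` has no API yet; on the left summand it is `M.row` by construction.
  have hb : ∀ i, b (Sum.inl i) = M i := fun i => by
    simp only [b, Module.Basis.sumExtend, Module.Basis.coe_reindex, Module.Basis.coe_extend,
      Function.comp_apply]
    rfl
  have : Finite (m ⊕ Module.Basis.sumExtendIndex hM) := Module.Finite.finite_basis b
  have : Finite (Module.Basis.sumExtendIndex hM) :=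
    Finite.of_injective (Sum.inr (α := m)) Sum.inr_injective
  obtain ⟨e⟩ : Nonempty (n ≃ Module.Basis.sumExtendIndex hM) := by
    rw [← Finite.card_eq]
    have := (Module.finrank_eq_nat_card_basis b).symm
    rw [Module.finrank_fintype_fun_eq_card, Nat.card_sum, Nat.card_eq_fintype_card,
      Fintype.card_sum] at this
    rw [Nat.card_eq_fintype_card]
    omega
  refine ⟨of (b ∘ Equiv.sumCongr (Equiv.refl m) e), ?_, ?_⟩
  · rw [← linearIndependent_rows_iff_isUnit]
    exact b.linearIndependent.comp _ (Equiv.injective _)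
  · ext i j
    simp [hb]

theorem mem_unimodularRows_of_linearIndependent_map {R K : Type*} [CommRing R] [Field K]
    (π : R →+* K) [IsLocalHom π] (hπ : Function.Surjective π) {M : Matrix m (m ⊕ n) R}
    (hM : LinearIndependent K (M.map π).row) : M ∈ unimodularRows m n R := by
  obtain ⟨Y, hY, hYM⟩ := exists_isUnit_toRows₁_eq hM
  set X := fromRows M (Y.toRows₂.map (Function.surjInv hπ))
  have hXY : X.map π = Y := by
    rw [fromRows_map, ← hYM, Matrix.map_map, Function.comp_def]
    simp only [Function.surjInv_eq hπ, Matrix.map_id', fromRows_toRows]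
  have hX : IsUnit X := by
    rw [isUnit_iff_isUnit_det]
    apply isUnit_of_map_unit π
    rw [RingHom.map_det, RingHom.mapMatrix_apply, hXY, ← isUnit_iff_isUnit_det]
    exact hY
  exact ⟨hX.unit, toRows₁_fromRows _ _⟩

variable {R : Type*} [Semiring R]

theorem card_GL_toRows₁_eq_mul [Finite R] (Q : Matrix m (m ⊕ n) R → Prop) :
    Nat.card {X : GL (m ⊕ n) R // Q X.val.toRows₁} =
      Nat.card {X : GL (m ⊕ n) R // X.val.toRows₁ = (1 : GL (m ⊕ n) R).val.toRows₁} *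
        Nat.card {M // Q M ∧ M ∈ unimodularRows m n R} := by
  refine Nat.card_subtype_comp_eq_mul _ (fun g => ?_) Q
  refine Nat.card_congr (Equiv.subtypeEquiv (Equiv.mulRight g⁻¹) fun X => ?_)
  have cancel : ∀ A : Matrix m (m ⊕ n) R, A * g⁻¹.val * g.val = A := fun A => by
    rw [Matrix.mul_assoc, ← Units.val_mul, inv_mul_cancel, Units.val_one, Matrix.mul_one]
  have hg : (1 : GL (m ⊕ n) R).val.toRows₁ = g.val.toRows₁ * g⁻¹.val := by
    rw [← toRows₁_mul, ← Units.val_mul, mul_inv_cancel]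
  show _ ↔ (X * g⁻¹).val.toRows₁ = _
  rw [Units.val_mul, toRows₁_mul, hg]
  exact ⟨fun h => by rw [h], fun h => by rw [← cancel X.val.toRows₁, h, cancel]⟩

theorem card_GL_toRows₁_div_card_GL [Finite R] (Q : Matrix m (m ⊕ n) R → Prop) :
    (Nat.card {X : GL (m ⊕ n) R // Q X.val.toRows₁} : ℝ) / Nat.card (GL (m ⊕ n) R) =
      Nat.card {M // Q M ∧ M ∈ unimodularRows m n R} / Nat.card (unimodularRows m n R) := by
  have hall := card_GL_toRows₁_eq_mul (m := m) (n := n) (R := R) fun _ => True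
  have : Nonempty {X : GL (m ⊕ n) R // X.val.toRows₁ = (1 : GL (m ⊕ n) R).val.toRows₁} :=
    ⟨⟨1, rfl⟩⟩
  rw [Nat.card_congr (Equiv.subtypeUnivEquiv fun _ => trivial)] at hall
  rw [hall, card_GL_toRows₁_eq_mul Q, Nat.cast_mul, Nat.cast_mul,
    mul_div_mul_left _ _ (Nat.cast_ne_zero.mpr Nat.card_pos.ne')]
  congr 2
  exact Nat.card_congr (Equiv.subtypeEquivRight fun _ => iff_of_eq (true_and _))

end Unimodular

theorem linearIndependent_row_fromCols {K m n₁ n₂ : Type*} [Semiring K] (A : Matrix m n₁ K)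
    {B : Matrix m n₂ K} (hB : LinearIndependent K B.row) : LinearIndependent K (fromCols A B).row :=
  LinearIndependent.of_comp (LinearMap.funLeft K K Sum.inr) hB

section Counting

variable {m : Type*} [Fintype m]

variable {R K : Type*} [Ring R] [Field K] (π : R →+* K) {β : Type*}

def vecMulMapHom (v : m → K) : Matrix m β R →+ (β → K) where
  toFun B := v ᵥ* B.map π
  map_zero' := by simp
  map_add' B C := by simp [Matrix.map_add, vecMul_add]

variable {π}

theorem vecMulMapHom_surjective (hπ : Function.Surjective π) {v : m → K} (hv : v ≠ 0) :
    Function.Surjective (vecMulMapHom π v (β := β)) := by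
  classical
  obtain ⟨i, hi⟩ := Function.ne_iff.mp hv
  intro w
  refine ⟨of fun k j => if k = i then Function.surjInv hπ ((v i)⁻¹ * w j) else 0, ?_⟩
  ext j
  simp [vecMulMapHom, vecMul, dotProduct, apply_ite π, Function.surjInv_eq hπ,
    mul_inv_cancel_left₀ hi]

theorem card_ker_vecMulMapHom_mul [Fintype β] [Finite R] [Finite K] (hπ : Function.Surjective π)
    {v : m → K} (hv : v ≠ 0) :
    Nat.card (vecMulMapHom π v (β := β)).ker * Nat.card K ^ Nat.card β =
      Nat.card R ^ (Nat.card m * Nat.card β) := by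
  rw [← Nat.card_matrix, ← (vecMulMapHom π v).ker.card_mul_index, AddSubgroup.index_ker,
    AddMonoidHom.range_eq_top.mpr (vecMulMapHom_surjective hπ hv), AddSubgroup.card_top,
    Nat.card_fun]

theorem card_not_linearIndependent_map_mul_le [Fintype β] [Finite R] [Finite K]
    (hπ : Function.Surjective π) :
    Nat.card {B : Matrix m β R // ¬LinearIndependent K (B.map π).row} * Nat.card K ^ Nat.card β ≤
      Nat.card K ^ Nat.card m * Nat.card R ^ (Nat.card m * Nat.card β) := by
  classical
  have := Fintype.ofFinite R
  have := Fintype.ofFinite K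
  let ker (v : m → K) := Finset.univ.filter fun B : Matrix m β R => vecMulMapHom π v B = 0
  have hker (v : m → K) (hv : v ≠ 0) :
      (ker v).card * Nat.card K ^ Nat.card β = Nat.card R ^ (Nat.card m * Nat.card β) := by
    rw [← card_ker_vecMulMapHom_mul hπ hv, ← Fintype.card_subtype, ← Nat.card_eq_fintype_card]
    rfl
  have hsub : Finset.univ.filter (fun B : Matrix m β R => ¬LinearIndependent K (B.map π).row) ⊆
      (Finset.univ.filter fun v : m → K => v ≠ 0).biUnion ker := by
    intro B hB
    simp only [Finset.mem_filter, Finset.mem_univ, true_and, Finset.mem_biUnion, ker] at hB ⊢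
    rw [← vecMul_injective_iff, ← coe_vecMulLinear, injective_iff_map_eq_zero] at hB
    push Not at hB
    obtain ⟨v, hBv, hv⟩ := hB
    exact ⟨v, hv, hBv⟩
  calc _ ≤ (∑ v ∈ Finset.univ.filter (· ≠ 0), (ker v).card) * Nat.card K ^ Nat.card β := by
        rw [Nat.card_eq_fintype_card, Fintype.card_subtype]
        gcongr
        exact (Finset.card_le_card hsub).trans Finset.card_biUnion_le
    _ = (Finset.univ.filter fun v : m → K => v ≠ 0).card *
          Nat.card R ^ (Nat.card m * Nat.card β) := by
        rw [Finset.sum_mul, Finset.sum_congr rfl fun v hv => hker v (Finset.mem_filter.mp hv).2,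
          Finset.sum_const, smul_eq_mul]
    _ ≤ _ := by
        gcongr
        exact (Finset.card_filter_le _ _).trans_eq (by simp [Nat.card_eq_fintype_card])

theorem one_sub_le_card_div [Fintype β] [Finite R] [Finite K] (hπ : Function.Surjective π)
    (P : Matrix m β R → Prop) (hP : ∀ B, LinearIndependent K (B.map π).row → P B) :
    1 - (Nat.card K : ℝ) ^ Nat.card m / Nat.card K ^ Nat.card β ≤
      Nat.card {B // P B} / Nat.card R ^ (Nat.card m * Nat.card β) := by
  have hbad := card_not_linearIndependent_map_mul_le (m := m) (β := β) hπ
  have hcover : Nat.card R ^ (Nat.card m * Nat.card β) ≤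
      Nat.card {B // P B} + Nat.card {B : Matrix m β R // ¬LinearIndependent K (B.map π).row} := by
    classical
    rw [← Nat.card_matrix, ← Nat.card_sum]
    refine Nat.card_le_card_of_injective
      (fun B => if h : P B then Sum.inl ⟨B, h⟩ else Sum.inr ⟨B, mt (hP B) h⟩) fun B C hBC => ?_
    by_cases hB : P B <;> by_cases hC : P C <;> simp_all
  have hK : (0 : ℝ) < Nat.card K ^ Nat.card β := pow_pos (by exact_mod_cast Nat.card_pos) _
  have hR : (0 : ℝ) < Nat.card R ^ (Nat.card m * Nat.card β) :=
    pow_pos (by exact_mod_cast Nat.card_pos) _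
  rw [sub_le_iff_le_add, div_add_div _ _ hR.ne' hK.ne', le_div_iff₀ (by positivity)]
  have hbad' := (Nat.cast_le (α := ℝ)).mpr hbad
  have hcover' := (Nat.cast_le (α := ℝ)).mpr hcover
  push_cast at hbad' hcover'
  nlinarith

theorem tendsto_card_div_card_matrix [Finite R] [Finite K] (hπ : Function.Surjective π)
    {β : ℕ → Type*} [∀ n, Fintype (β n)] (hβ : Tendsto (fun n => Nat.card (β n)) atTop atTop)
    (P : ∀ n, Matrix m (β n) R → Prop) (hP : ∀ n B, LinearIndependent K (B.map π).row → P n B) :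
    Tendsto (fun n => (Nat.card {B // P n B} : ℝ) / Nat.card R ^ (Nat.card m * Nat.card (β n)))
      atTop (𝓝 1) := by
  have hK : (1 : ℝ) < Nat.card K := by exact_mod_cast Finite.one_lt_card
  have hlow : Tendsto (fun n => 1 - (Nat.card K : ℝ) ^ Nat.card m / Nat.card K ^ Nat.card (β n))
      atTop (𝓝 1) := by
    simpa using tendsto_const_nhds.sub
      (tendsto_const_nhds.div_atTop ((tendsto_pow_atTop_atTop_of_one_lt hK).comp hβ))
  refine tendsto_of_tendsto_of_tendsto_of_le_of_le hlow tendsto_const_nhds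
    (fun n => one_sub_le_card_div hπ (P n) (hP n)) fun n => ?_
  rw [← Nat.cast_pow, ← Nat.card_matrix]
  exact div_le_one_of_le₀ (Nat.cast_le.mpr (Finite.card_subtype_le (P n))) (by positivity)

end Counting

end Matrix

theorem card_GL_corner_div_card_GL {R : Type*} [CommRing R] [Finite R] (S n : ℕ)
    (W : Matrix (Fin S) (Fin S) R) :
    (Nat.card {X : GL (Fin (S + n)) R //
        (fun i j : Fin S => (X : Matrix (Fin (S + n)) (Fin (S + n)) R)
          (Fin.castLE (Nat.le_add_right S n) i) (Fin.castLE (Nat.le_add_right S n) j)) = W} : ℝ) /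
        Nat.card (GL (Fin (S + n)) R) =
      Nat.card {B : Matrix (Fin S) (Fin n) R // fromCols W B ∈ unimodularRows (Fin S) (Fin n) R} /
        Nat.card (unimodularRows (Fin S) (Fin n) R) := by
  let e : GL (Fin S ⊕ Fin n) R ≃* GL (Fin (S + n)) R :=
    Units.mapEquiv (reindexAlgEquiv R R finSumFinEquiv).toMulEquiv
  have hcorner : ∀ Y : GL (Fin S ⊕ Fin n) R,
      (fun i j : Fin S => (e Y).val (Fin.castLE (Nat.le_add_right S n) i)
        (Fin.castLE (Nat.le_add_right S n) j)) = Y.val.toRows₁.toCols₁ := by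
    have hinl : ∀ i : Fin S,
        finSumFinEquiv.symm (Fin.castLE (Nat.le_add_right S n) i) = Sum.inl i :=
      finSumFinEquiv_symm_apply_castAdd
    intro Y
    ext i j
    simp [e, hinl]
  rw [← Nat.card_congr e.toEquiv, ← Nat.card_congr (Equiv.subtypeEquiv e.toEquiv
    (p := fun Y : GL (Fin S ⊕ Fin n) R => Y.val.toRows₁.toCols₁ = W)
    fun Y => by rw [MulEquiv.toEquiv_eq_coe, MulEquiv.coe_toEquiv, hcorner]; exact Iff.rfl),
    card_GL_toRows₁_div_card_GL (fun M => M.toCols₁ = W)]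
  congr 2
  refine Nat.card_congr
    { toFun M := ⟨M.1.toCols₂, by obtain ⟨M, rfl, hM⟩ := M; rwa [fromCols_toCols]⟩
      invFun B := ⟨fromCols W B, toCols₁_fromCols _ _, B.2⟩
      left_inv := by rintro ⟨M, rfl, hM⟩; exact Subtype.ext (fromCols_toCols M)
      right_inv B := Subtype.ext (toCols₂_fromCols _ _) }

theorem ZMod.isLocalHom_castHom_pow {p r : ℕ} (hp : p.Prime) (hr : r ≠ 0) :
    IsLocalHom (ZMod.castHom (dvd_pow_self p hr) (ZMod p)) where
  map_nonunit x hx := by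
    have : NeZero (p ^ r) := ⟨pow_ne_zero r hp.ne_zero⟩
    rw [← ZMod.natCast_zmod_val x] at hx ⊢
    rw [map_natCast, ZMod.isUnit_iff_coprime] at hx
    rw [ZMod.isUnit_iff_coprime]
    exact hx.pow_right r

theorem stmt_7_general (p : ℕ) (hp : p.Prime) (r : ℕ) (hr : 1 ≤ r) (S : ℕ)
    (W : Matrix (Fin S) (Fin S) (ZMod (p ^ r))) :
    Tendsto (fun n : ℕ =>
        (Nat.card {X : GL (Fin (S + n)) (ZMod (p ^ r)) //
            (fun i j : Fin S => (X : Matrix (Fin (S + n)) (Fin (S + n)) (ZMod (p ^ r)))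
              (Fin.castLE (Nat.le_add_right S n) i)
              (Fin.castLE (Nat.le_add_right S n) j)) = W} : ℝ) /
          (Nat.card (GL (Fin (S + n)) (ZMod (p ^ r))) : ℝ))
      atTop (nhds (((p : ℝ) ^ (r * S ^ 2))⁻¹)) := by
  have : Fact p.Prime := ⟨hp⟩
  have hr0 : r ≠ 0 := by omega
  let π := ZMod.castHom (dvd_pow_self p hr0) (ZMod p)
  have : IsLocalHom π := ZMod.isLocalHom_castHom_pow hp hr0
  have hπ : Function.Surjective π := ZMod.ringHom_surjective π
  have hcorner := tendsto_card_div_card_matrix hπ (β := Fin)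
    (by simp only [Nat.card_fin]; exact tendsto_id)
    (fun n B => fromCols W B ∈ unimodularRows (Fin S) (Fin n) (ZMod (p ^ r)))
    fun n B hB => mem_unimodularRows_of_linearIndependent_map π hπ <| by
      rw [fromCols_map]; exact linearIndependent_row_fromCols _ hB
  have hall := tendsto_card_div_card_matrix hπ (β := fun n => Fin S ⊕ Fin n)
    (by simp only [Nat.card_sum, Nat.card_fin]
        exact tendsto_atTop_mono (Nat.le_add_left · S) tendsto_id)
    (fun n M => M ∈ unimodularRows (Fin S) (Fin n) (ZMod (p ^ r)))
    fun n M hM => mem_unimodularRows_of_linearIndependent_map π hπ hM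
  convert (hcorner.div hall one_ne_zero).mul_const ((p : ℝ) ^ (r * S ^ 2))⁻¹ using 1
  · ext n
    rw [card_GL_corner_div_card_GL]
    simp only [Pi.div_apply, Nat.card_zmod, Nat.card_sum, Nat.card_fin]
    have hp0 : (p : ℝ) ≠ 0 := by exact_mod_cast hp.ne_zero
    push_cast
    field_simp
    ring
  · simp

theorem stmt_7 (p : ℕ) (hp : p.Prime) (r : ℕ) (hr : 1 ≤ r) (S : ℕ) (hS : 1 ≤ S)
    (W : Matrix (Fin S) (Fin S) (ZMod (p ^ r))) :
    Tendsto (fun n : ℕ =>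
        (Nat.card {X : GL (Fin (S + n)) (ZMod (p ^ r)) //
            (fun i j : Fin S => (X : Matrix (Fin (S + n)) (Fin (S + n)) (ZMod (p ^ r)))
              (Fin.castLE (Nat.le_add_right S n) i)
              (Fin.castLE (Nat.le_add_right S n) j)) = W} : ℝ) /
          (Nat.card (GL (Fin (S + n)) (ZMod (p ^ r))) : ℝ))
      atTop (nhds (((p : ℝ) ^ (r * S ^ 2))⁻¹)) :=
  stmt_7_general p hp r hr S W
end
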